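/- Let G be a δ-hyperbolic group and h ∈ G, R ≥ 0. Then there is a constant c depending only on δ such that the shadow S_1(h,R) in G is contained in the union over g in the ball B_{R+c}(h) of the cones cone(g), where cone(g) is the set of elements reachable by combing geodesics through g. -/

import Mathlib

/-
A point `z` of the shadow has `(1,z)_h ≤ R + 2δ + 1/2`. Take `g` on the combing geodesic from `1`
to `z` at distance about `d(h,1) - (1,z)_h` from `1`; then `z ∈ cone g`, and the four-point
condition at `h` for `1, g, z` gives `d(h,g) ≤ (1,z)_h + 2δ + 1`. The word metric
`d(x,y) = |x⁻¹y|` is not symmetric, so passing from the shadow condition, which involves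
`d(1,h)`, to `(1,z)_h`, which involves `d(h,1)`, needs `|h⁻¹| ≤ |h| + 4δ + 1`; this comes from the
four-point condition at `1` applied along the combing geodesic from `1` to `h⁻¹`.
-/

/-- The word length of `g` with respect to the generating set `S`. -/
noncomputable def wordLength {G : Type*} [Group G] (S : Set G) (g : G) : ℕ :=
  sInf {n | ∃ l : List G, l.length = n ∧ (∀ x ∈ l, x ∈ S) ∧ l.prod = g}

/-- The Gromov product `(y,z)_x` in the word metric `d(g,h) = |g⁻¹h|_S`. -/
noncomputable def gp3 {G : Type*} [Group G] (S : Set G) (x y z : G) : ℝ :=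
  ((wordLength S (x⁻¹ * y) : ℝ) + (wordLength S (x⁻¹ * z) : ℝ)
    - (wordLength S (y⁻¹ * z) : ℝ)) / 2

/-- The shadow `S_1(h,R)` in `G` based at the identity: elements `z` with
`(h,z)_1 ≥ d(1,h) − R`. -/
noncomputable def groupShadow {G : Type*} [Group G] (S : Set G) (h : G) (R : ℝ) :
    Set G :=
  {z | (wordLength S h : ℝ) - R ≤ gp3 S 1 h z}

/-- Running the combing automaton from a state along a word. -/
def run {V G : Type*} (tr : V → G → Option V) : V → List G → Option V
  | v, [] => some v
  | v, a :: l => (tr v a).bind fun w => run tr w l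

/-- The cone of `g`: elements `h` reachable by combing geodesics through `g`, i.e.
the combing word of `h` has a prefix evaluating to `g`. -/
def cone {V G : Type*} (tr : V → G → Option V) (v0 : V) (S : Set G) [Monoid G]
    (g : G) : Set G :=
  {h | ∃ l₁ l₂ : List G, (∀ x ∈ l₁ ++ l₂, x ∈ S) ∧
        (run tr v0 (l₁ ++ l₂)).isSome ∧ l₁.prod = g ∧ (l₁ ++ l₂).prod = h}

section WordMetric

variable {G : Type*} [Group G] {S : Set G}

theorem wordLength_prod_le {l : List G} (hl : ∀ x ∈ l, x ∈ S) :
    wordLength S l.prod ≤ l.length :=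
  Nat.sInf_le ⟨l, rfl, hl, rfl⟩

theorem wordLength_one : wordLength S (1 : G) = 0 :=
  Nat.le_zero.1 (wordLength_prod_le (l := []) (by simp))

theorem exists_word_length_eq_wordLength
    (hgen : ∀ g : G, ∃ l : List G, (∀ x ∈ l, x ∈ S) ∧ l.prod = g) (g : G) :
    ∃ l : List G, l.length = wordLength S g ∧ (∀ x ∈ l, x ∈ S) ∧ l.prod = g :=
  Nat.sInf_mem (s := {n | ∃ l : List G, l.length = n ∧ (∀ x ∈ l, x ∈ S) ∧ l.prod = g})
    (let ⟨l, hl, hp⟩ := hgen g; ⟨l.length, l, rfl, hl, hp⟩)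

theorem wordLength_mul_le (hgen : ∀ g : G, ∃ l : List G, (∀ x ∈ l, x ∈ S) ∧ l.prod = g)
    (a b : G) : wordLength S (a * b) ≤ wordLength S a + wordLength S b := by
  obtain ⟨la, hla, ha, rfl⟩ := exists_word_length_eq_wordLength hgen a
  obtain ⟨lb, hlb, hb, rfl⟩ := exists_word_length_eq_wordLength hgen b
  simpa only [List.prod_append, List.length_append, hla, hlb] using
    wordLength_prod_le (List.forall_mem_append.2 ⟨ha, hb⟩)

end WordMetric

section Hyperbolic

variable {G : Type*} [Group G] {S : Set G} {δ : ℝ}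

def IsGromovHyperbolic (S : Set G) (δ : ℝ) : Prop :=
  ∀ x a b c : G, min (gp3 S x a b) (gp3 S x b c) - δ ≤ gp3 S x a c

/-- The four-point condition at `1` for `g`, `y`, `1`, with `g` on a geodesic from `1` to `y`. -/
theorem IsGromovHyperbolic.wordLength_le_wordLength_inv_add (hS : IsGromovHyperbolic S δ)
    {g y : G} (hgy : wordLength S g + wordLength S (g⁻¹ * y) = wordLength S y)
    (hδg : 2 * δ < wordLength S g) :
    (wordLength S y : ℝ) ≤ wordLength S y⁻¹ + wordLength S g + 2 * δ := by
  have hfour := hS 1 g y 1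
  have hgy' : (wordLength S g : ℝ) + wordLength S (g⁻¹ * y) = wordLength S y := by
    exact_mod_cast hgy
  have hginv : (0 : ℝ) ≤ wordLength S g⁻¹ := Nat.cast_nonneg _
  simp only [gp3, inv_one, one_mul, mul_one, wordLength_one, Nat.cast_zero] at hfour
  rcases min_le_iff.1 (sub_le_iff_le_add.1 hfour) with h | h <;> linarith

theorem IsGromovHyperbolic.wordLength_inv_mul_le_max (hS : IsGromovHyperbolic S δ)
    {g z : G} (hgz : wordLength S g + wordLength S (g⁻¹ * z) = wordLength S z) (x : G) :
    (wordLength S (x⁻¹ * g) : ℝ) ≤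
      max ((wordLength S (x⁻¹ * z) : ℝ) - wordLength S (g⁻¹ * z))
        ((wordLength S x⁻¹ : ℝ) - wordLength S g) + 2 * δ := by
  have hfour := hS x 1 g z
  have hgz' : (wordLength S g : ℝ) + wordLength S (g⁻¹ * z) = wordLength S z := by
    exact_mod_cast hgz
  simp only [gp3, inv_one, one_mul, mul_one] at hfour
  rw [← sub_le_iff_le_add, le_max_iff]
  exact (min_le_iff.1 (sub_le_iff_le_add.1 hfour)).imp (fun h => by linarith) fun h => by linarith

end Hyperbolic

section Combing

variable {G V : Type*} [Group G] {S : Set G} {tr : V → G → Option V} {v0 : V}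

structure IsGeodesicCombing (S : Set G) (tr : V → G → Option V) (v0 : V) : Prop where
  geodesic : ∀ l : List G, (∀ x ∈ l, x ∈ S) → (run tr v0 l).isSome →
    wordLength S l.prod = l.length
  surjective : ∀ g : G, ∃ l : List G, (∀ x ∈ l, x ∈ S) ∧ (run tr v0 l).isSome ∧ l.prod = g

namespace IsGeodesicCombing

theorem generates (hC : IsGeodesicCombing S tr v0) (g : G) :
    ∃ l : List G, (∀ x ∈ l, x ∈ S) ∧ l.prod = g :=
  let ⟨l, hl, _, hp⟩ := hC.surjective g
  ⟨l, hl, hp⟩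

theorem mem_cone_self (hC : IsGeodesicCombing S tr v0) (z : G) : z ∈ cone tr v0 S z := by
  obtain ⟨l, hl, hrun, rfl⟩ := hC.surjective z
  exact ⟨l, [], by simpa using hl, by simpa using hrun, rfl, by simp⟩

/-- The prefix of length `u` of the combing word of `z`. -/
theorem exists_mem_cone (hC : IsGeodesicCombing S tr v0) (z : G) {u : ℕ}
    (hu : u ≤ wordLength S z) :
    ∃ g : G, wordLength S g = u ∧
      wordLength S g + wordLength S (g⁻¹ * z) = wordLength S z ∧ z ∈ cone tr v0 S g := by
  obtain ⟨l, hl, hrun, rfl⟩ := hC.surjective z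
  have hlen := hC.geodesic l hl hrun
  have hsplit : (l.take u).prod⁻¹ * l.prod = (l.drop u).prod := by
    rw [← List.prod_take_mul_prod_drop l u, inv_mul_cancel_left]
  have htake : wordLength S (l.take u).prod ≤ (l.take u).length :=
    wordLength_prod_le fun x hx => hl x (List.mem_of_mem_take hx)
  have hdrop : wordLength S (l.drop u).prod ≤ (l.drop u).length :=
    wordLength_prod_le fun x hx => hl x (List.mem_of_mem_drop hx)
  have htri := wordLength_mul_le hC.generates (l.take u).prod (l.drop u).prod
  rw [List.prod_take_mul_prod_drop] at htri
  rw [List.length_take] at htake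
  rw [List.length_drop] at hdrop
  refine ⟨(l.take u).prod, by omega, by rw [hsplit]; omega, l.take u, l.drop u, ?_, ?_, rfl, ?_⟩ <;>
    rw [List.take_append_drop] <;> assumption

end IsGeodesicCombing

end Combing

section Shadow

variable {G V : Type*} [Group G] {S : Set G} {tr : V → G → Option V} {v0 : V} {δ : ℝ}

theorem IsGromovHyperbolic.wordLength_le_wordLength_inv_add_of_isGeodesicCombing
    (hS : IsGromovHyperbolic S δ) (hδ : 0 ≤ δ) (hC : IsGeodesicCombing S tr v0) (y : G) :
    (wordLength S y : ℝ) ≤ wordLength S y⁻¹ + (4 * δ + 1) := by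
  set K := ⌊2 * δ⌋₊ + 1
  have hKlt : 2 * δ < K := by simpa [K] using Nat.lt_floor_add_one (2 * δ)
  have hKle : (K : ℝ) ≤ 2 * δ + 1 := by
    simpa [K] using Nat.floor_le (by positivity : 0 ≤ 2 * δ)
  have hy : (wordLength S y : ℝ) ≤ wordLength S y⁻¹ + K + 2 * δ := by
    rcases le_or_gt K (wordLength S y) with hK | hK
    · obtain ⟨g, hgK, hgy, -⟩ := hC.exists_mem_cone y hK
      rw [← hgK] at hKlt ⊢
      exact hS.wordLength_le_wordLength_inv_add hgy hKlt
    · have : (wordLength S y : ℝ) < K := by exact_mod_cast hK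
      have : (0 : ℝ) ≤ wordLength S y⁻¹ := Nat.cast_nonneg _
      linarith
  linarith

theorem groupShadow_subset_iUnion_cone (hS : IsGromovHyperbolic S δ) (hδ : 0 ≤ δ)
    (hC : IsGeodesicCombing S tr v0) (h : G) (R : ℝ) :
    groupShadow S h R ⊆
      ⋃ (g : G) (_ : (wordLength S (h⁻¹ * g) : ℝ) ≤ R + (4 * δ + 2)), cone tr v0 S g := by
  intro z hz
  set A : ℝ := (wordLength S h⁻¹ : ℝ)
  set E : ℝ := (wordLength S (h⁻¹ * z) : ℝ)
  set n : ℝ := (wordLength S z : ℝ)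
  have hshadow : (wordLength S h : ℝ) + E - n ≤ 2 * R := by
    have hz : (wordLength S h : ℝ) - R ≤ gp3 S 1 h z := hz
    simp only [gp3, inv_one, one_mul] at hz
    linarith
  have hsym : A ≤ wordLength S h + (4 * δ + 1) := by
    simpa using hS.wordLength_le_wordLength_inv_add_of_isGeodesicCombing hδ hC h⁻¹
  have htri : E ≤ A + n := by
    simpa only [Nat.cast_add] using
      Nat.cast_le (α := ℝ) |>.2 (wordLength_mul_le hC.generates h⁻¹ z)
  simp only [Set.mem_iUnion, exists_prop]
  rcases le_or_gt ((A + n - E) / 2) n with hle | hlt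
  · have hu : ⌊(A + n - E) / 2⌋₊ ≤ wordLength S z := Nat.floor_le_of_le hle
    obtain ⟨g, hgu, hgz, hcone⟩ := hC.exists_mem_cone z hu
    have hfloor_le := Nat.floor_le (by linarith : 0 ≤ (A + n - E) / 2)
    have hfloor_gt := Nat.lt_floor_add_one ((A + n - E) / 2)
    have hgz' : (wordLength S g : ℝ) + wordLength S (g⁻¹ * z) = n := by
      simpa only [Nat.cast_add] using congrArg (Nat.cast (R := ℝ)) hgz
    rw [← hgu] at hfloor_le hfloor_gt
    refine ⟨g, ?_, hcone⟩
    have hmax : max (E - wordLength S (g⁻¹ * z)) (A - wordLength S g) ≤ R + 2 * δ + 2 :=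
      max_le (by linarith) (by linarith)
    linarith [hS.wordLength_inv_mul_le_max hgz h]
  · exact ⟨z, by linarith, hC.mem_cone_self z⟩

end Shadow

/-- for a δ-hyperbolic group with a geodesic combing, there is a
constant `c` depending only on δ such that any shadow `S_1(h,R)` is covered by the
cones of the elements of the ball `B_{R+c}(h)`. -/
theorem shadow_subset_union_cones (δ : ℝ) (hδ : 0 ≤ δ) :
    ∃ c : ℝ, 0 ≤ c ∧
      ∀ (G V : Type) [Group G] [Fintype V] (S : Finset G),
        (∀ g : G, ∃ l : List G, (∀ x ∈ l, x ∈ (S : Set G)) ∧ l.prod = g) →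
        (∀ x a b c' : G,
          min (gp3 (S : Set G) x a b) (gp3 (S : Set G) x b c') - δ ≤
            gp3 (S : Set G) x a c') →
        ∀ (v0 : V) (tr : V → G → Option V),
        (∀ l : List G, (∀ x ∈ l, x ∈ (S : Set G)) → (run tr v0 l).isSome →
          wordLength (S : Set G) l.prod = l.length) →
        (∀ g : G, ∃! l : List G,
          (∀ x ∈ l, x ∈ (S : Set G)) ∧ (run tr v0 l).isSome ∧ l.prod = g) →
        ∀ (h : G) (R : ℝ), 0 ≤ R →
          ∀ z ∈ groupShadow (S : Set G) h R,
            ∃ g : G, (wordLength (S : Set G) (h⁻¹ * g) : ℝ) ≤ R + c ∧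
              z ∈ cone tr v0 (S : Set G) g := by
  refine ⟨4 * δ + 2, by positivity, ?_⟩
  intro G V _ _ S _ hS v0 tr hgeo hcomb h R _ z hz
  simpa using groupShadow_subset_iUnion_cone hS hδ ⟨hgeo, fun g => (hcomb g).exists⟩ h R hz
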